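/- arXiv:math/0602555 — 2 statements merged into one kernel-verified Lean document; each statement's English description precedes it below -/
import Mathlib

section
/- Let (Ψ_n) be a sequence of automorphisms of F such that the currents Ψ_nη_A converge weakly-* to a geodesic current η. Let p ≠ q be points of ∂F and let p_n, q_n be nonempty freely reduced words with p_n → p and q_n → q (meaning: for every m, for all sufficiently large n the word p_n has length at least m and its length-m prefix equals the length-m prefix of p, and likewise for q_n and q). If there is a constant c > 0 such that η_A((∂Ψ_n × ∂Ψ_n)⁻¹(Cyl(p_n) × Cyl(q_n))) > c for all n, then η has a part concentrated on (p,q); in fact η({(p,q)}) ≥ c, while η_A({(p,q)}) = 0. -/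
open MeasureTheory Filter Topology
open scoped ENNReal NNReal

namespace FGC

noncomputable section

variable (k : ℕ)

/-- The alphabet `A = Σ ∪ Σ⁻¹`: a letter is a basis element together with a sign. -/
abbrev L := Fin k × Bool

/-- The inverse of a letter. -/
def linv (a : L k) : L k := (a.1, !a.2)

/-- A right-infinite word is (freely) reduced if no letter is followed by its inverse. -/
def Red (x : ℕ → L k) : Prop := ∀ n, x (n + 1) ≠ linv k (x n)

/-- The boundary `∂F`: the set of infinite freely reduced words in the alphabet `A`. -/
def Boundary : Type := { x : ℕ → L k // Red k x }

instance : TopologicalSpace (Boundary k) :=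
  inferInstanceAs (TopologicalSpace { x : ℕ → L k // Red k x })

instance : MeasurableSpace (Boundary k) := borel _

instance : BorelSpace (Boundary k) := ⟨rfl⟩

/-- The free group of rank `k`. -/
abbrev F := FreeGroup (Fin k)

/-- The word length `|v|` of an element of `F`. -/
def wordLength (v : F k) : ℕ := v.toWord.length

/-- The cyclically reduced length `‖v‖`: the minimal word length among conjugates of `v`. -/
def cyclLength (v : F k) : ℕ := sInf { n | ∃ g : F k, wordLength k (g * v * g⁻¹) = n }

/-- The cylinder `Cyl v ⊆ ∂F` of rays starting with the reduced word of `v`. -/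
def Cyl (v : F k) : Set (Boundary k) :=
  { x | ∀ i : Fin v.toWord.length, x.1 i = v.toWord.get i }

/-- The shift deleting the first letter of a ray. -/
def shift (x : ℕ → L k) : ℕ → L k := fun n => x (n + 1)

/-- Prepending a letter to a ray. -/
def cons (a : L k) (x : ℕ → L k) : ℕ → L k
  | 0 => a
  | n + 1 => x n

/-- Prepending a (reversed) finite word to a ray, performing free reduction. -/
def prependAux : List (L k) → (ℕ → L k) → ℕ → L k
  | [], x => x
  | a :: r, x => prependAux r (if x 0 = linv k a then shift k x else cons k a x)

theorem red_shift {x : ℕ → L k} (hx : Red k x) : Red k (shift k x) :=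
  fun n => hx (n + 1)

theorem red_cons {a : L k} {x : ℕ → L k} (hx : Red k x) (h : x 0 ≠ linv k a) :
    Red k (cons k a x) := by
  intro n
  cases n with
  | zero => exact h
  | succ m => exact hx m

theorem red_prependAux : ∀ (r : List (L k)) {x : ℕ → L k}, Red k x → Red k (prependAux k r x)
  | [], _, hx => hx
  | a :: r, x, hx => by
    by_cases h : x 0 = linv k a
    · simp only [prependAux, if_pos h]
      exact red_prependAux r (red_shift k hx)
    · simp only [prependAux, if_neg h]
      exact red_prependAux r (red_cons k hx h)

/-- The left-translation action of `F` on `∂F`: concatenate and freely reduce. -/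
def act (g : F k) (x : Boundary k) : Boundary k :=
  ⟨prependAux k g.toWord.reverse x.1, red_prependAux k _ x.2⟩

/-- The shift map `T : ∂F → ∂F`. -/
def Tmap (x : Boundary k) : Boundary k := ⟨shift k x.1, red_shift k x.2⟩

/-- The double boundary `∂²F`, as the complement of the diagonal. -/
def D2 : Set (Boundary k × Boundary k) := { p | p.1 ≠ p.2 }

/-- The diagonal action of `F` on `∂F × ∂F`. -/
def actPair (g : F k) (p : Boundary k × Boundary k) : Boundary k × Boundary k :=
  (act k g p.1, act k g p.2)

/-- The cylinder `Cyl[1,w]` of geodesics through the segment from `1` to `w`. -/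
def baseCyl (w : F k) : Set (Boundary k × Boundary k) :=
  { p | p.1.1 0 ≠ p.2.1 0 ∧ p.2 ∈ Cyl k w }

/-- The base-ball `B = Cyl[1,1]` of geodesics through the base point. -/
def baseBall : Set (Boundary k × Boundary k) := baseCyl k 1

/-- The cylinder `Cyl[x,y] = x · Cyl[1, x⁻¹y]`. -/
def Cyl2 (x y : F k) : Set (Boundary k × Boundary k) :=
  actPair k x '' baseCyl k (x⁻¹ * y)

/-- A geodesic current: a Borel measure on `∂F × ∂F` giving no mass to the diagonal,
invariant under the diagonal `F`-action, and finite on compact subsets of `∂²F`. -/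
def IsCurrent (η : Measure (Boundary k × Boundary k)) : Prop :=
  η { p | p.1 = p.2 } = 0 ∧
  (∀ g : F k, ∀ W : Set (Boundary k × Boundary k), MeasurableSet W →
    η (actPair k g ⁻¹' W) = η W) ∧
  (∀ K : Set (Boundary k × Boundary k), K ⊆ D2 k → IsCompact K → η K < ⊤)

/-- The element of `F` given by the first `n` letters of a ray. -/
def prefixEl (x : Boundary k) (n : ℕ) : F k :=
  FreeGroup.mk (List.ofFn fun i : Fin n => x.1 i)

/-- `b : ∂F → ∂F` is the boundary extension of the automorphism `Φ`: for every ray `x`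
and every `m`, the length-`m` prefix of `b x` is the length-`m` prefix of the reduced
word of `Φ (x|_n)` for all sufficiently large `n`. -/
def IsBdryExt (Φ : F k ≃* F k) (b : Boundary k → Boundary k) : Prop :=
  ∀ x : Boundary k, ∀ m : ℕ, ∃ N : ℕ, ∀ n ≥ N,
    (Φ (prefixEl k x n)).toWord.take m = List.ofFn fun i : Fin m => (b x).1 i

/-- The map `∂Φ × ∂Φ` on pairs. -/
def pairMap (b : Boundary k → Boundary k) (p : Boundary k × Boundary k) :
    Boundary k × Boundary k := (b p.1, b p.2)

/-- The length of an automorphism with boundary map `b`, w.r.t. the current `η`: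
`L(Φ) = η((∂Φ × ∂Φ)⁻¹ B)`. -/
def autLen (η : Measure (Boundary k × Boundary k)) (b : Boundary k → Boundary k) : ℝ≥0∞ :=
  η (pairMap k b ⁻¹' baseBall k)

/-- The subgroup of inner automorphisms. -/
abbrev Inn : Subgroup (MulAut (F k)) := (MulAut.conj : F k →* MulAut (F k)).range

/-- `Out(F) = Aut(F)/Inn(F)` as a coset space. -/
abbrev OutQ := MulAut (F k) ⧸ Inn k

/-- A simple automorphism: induced by a permutation of the basis, or inner. -/
def SimpleAut (Φ : MulAut (F k)) : Prop :=
  (∃ σ : Equiv.Perm (Fin k), ∀ i, Φ (FreeGroup.of i) = FreeGroup.of (σ i)) ∨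
  (∃ v : F k, ∀ x, Φ x = v * x * v⁻¹)

/-- A Whitehead automorphism of the second kind. -/
def Whitehead2 (τ : MulAut (F k)) : Prop :=
  ∃ a : Fin k, ∀ i : Fin k,
    τ (FreeGroup.of i) = FreeGroup.of i ∨
    τ (FreeGroup.of i) = FreeGroup.of i * FreeGroup.of a ∨
    τ (FreeGroup.of i) = (FreeGroup.of a)⁻¹ * FreeGroup.of i ∨
    τ (FreeGroup.of i) = (FreeGroup.of a)⁻¹ * FreeGroup.of i * FreeGroup.of a

/-- The space of frequency measures: finite `T`-invariant Borel measures on `∂F`. -/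
def FreqM : Type :=
  { μ : Measure (Boundary k) //
    IsFiniteMeasure μ ∧ ∀ W : Set (Boundary k), MeasurableSet W → μ (Tmap k ⁻¹' W) = μ W }

/-- The space of geodesic currents. -/
def Currents : Type := { η : Measure (Boundary k × Boundary k) // IsCurrent k η }

/-- Continuous functions on `∂F × ∂F` with compact support contained in `∂²F`;
these are the test functions for the weak-* topology on currents. -/
def TestF : Type :=
  { φ : Boundary k × Boundary k → ℝ //
    Continuous φ ∧ IsCompact (tsupport φ) ∧ tsupport φ ⊆ D2 k }

/-- The weak-* topology on frequency measures. -/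
instance : TopologicalSpace (FreqM k) :=
  ⨅ φ : C(Boundary k, ℝ),
    TopologicalSpace.induced (fun μ : FreqM k => ∫ x, φ x ∂μ.1) inferInstance

/-- The weak-* topology on geodesic currents. -/
instance : TopologicalSpace (Currents k) :=
  ⨅ φ : TestF k,
    TopologicalSpace.induced (fun η : Currents k => ∫ p, φ.1 p ∂η.1) inferInstance

/-- Convergence of a sequence of group elements (as reduced words) to a boundary ray. -/
def WordTendsto (pn : ℕ → F k) (p : Boundary k) : Prop :=
  ∀ m : ℕ, ∃ N : ℕ, ∀ n ≥ N, (pn n).toWord.take m = List.ofFn fun i : Fin m => p.1 i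

/-- The length of the maximal common initial segment of two rays. -/
def commonLen (p : Boundary k × Boundary k) : ℕ :=
  sSup { m : ℕ | ∀ i < m, p.1.1 i = p.2.1 i }

/-- A single letter as an element of `F`. -/
def el (a : L k) : F k := FreeGroup.mk [a]

/-- The product of per-letter constants over the reduced word of `w`. -/
def Cprod (C : L k → ℝ≥0) (w : F k) : ℝ≥0 := (w.toWord.map C).prod


end

end FGC

/-!
Boundary maps of automorphisms are continuous by bounded cancellation, so the indicator of the
clopen box `Cyl(p|m) × Cyl(q|m)`, which avoids the diagonal once `p|m ≠ q|m`, is a test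
function. The boxes `Cyl(pₙ) × Cyl(qₙ)` eventually lie in it, so weak-* convergence gives it
`η`-mass at least `c`, and the boxes shrink to `(p, q)`. On the other hand, if `m` is the first
index where `p` and `q` differ, then `(p, q)` lies in every `Cyl[p|m, q|(m + j)]`, whose
`η_A`-mass `(2k(2k - 1)^(j - 1))⁻¹` tends to `0`.
-/

namespace FreeGroup

variable {α : Type*} [DecidableEq α]

theorem reduce_append_of_isReduced {L₁ L₂ : List (α × Bool)} (h₁ : IsReduced L₁)
    (h₂ : IsReduced L₂) :
    ∃ s ≤ L₁.length, s ≤ L₂.length ∧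
      reduce (L₁ ++ L₂) = L₁.take (L₁.length - s) ++ L₂.drop s := by
  induction L₁ with
  | nil => exact ⟨0, le_rfl, Nat.zero_le _, by simpa using h₂.reduce_eq⟩
  | cons a L₁ ih =>
    obtain ⟨s, hs₁, hs₂, hred⟩ := ih (h₁.infix ⟨[a], [], by simp⟩)
    rw [List.cons_append, reduce.cons, hred]
    rcases hs₁.lt_or_eq with hlt | rfl
    · obtain ⟨b, L₁, rfl⟩ := List.exists_cons_of_length_pos (by omega : 0 < L₁.length)
      have hab : ¬(a.1 = b.1 ∧ a.2 = !b.2) := fun h => by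
        have := (isReduced_cons_cons.1 h₁).1 h.1
        cases a; cases b; simp_all
      simp only [List.length_cons] at hlt ⊢
      refine ⟨s, by omega, hs₂, ?_⟩
      rw [show L₁.length + 1 + 1 - s = (L₁.length + 1 - s) + 1 by omega,
        show L₁.length + 1 - s = (L₁.length - s) + 1 by omega]
      simp [hab]
    · rw [Nat.sub_self, List.take_zero, List.nil_append]
      rcases hdrop : L₂.drop L₁.length with _ | ⟨b, L⟩
      · exact ⟨L₁.length, by simp, hs₂, by simp [hdrop]⟩
      · have hlt : L₁.length < L₂.length := by
          by_contra h; simp [List.drop_eq_nil_of_le (not_lt.1 h)] at hdrop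
        by_cases hab : a.1 = b.1 ∧ a.2 = !b.2
        · refine ⟨L₁.length + 1, by simp, hlt, ?_⟩
          simp [hab, ← List.drop_drop, hdrop]
        · refine ⟨L₁.length, by simp, hs₂, ?_⟩
          simp [hab, hdrop]

theorem take_toWord_mul_of_norm_le {u v : FreeGroup α} {m : ℕ} (h : m + v.norm ≤ u.norm) :
    (u * v).toWord.take m = u.toWord.take m := by
  unfold norm at h
  obtain ⟨s, -, hs, hred⟩ := reduce_append_of_isReduced (isReduced_toWord (x := u))
    (isReduced_toWord (x := v))
  rw [toWord_mul, hred, List.take_append_of_le_length (by rw [List.length_take]; omega),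
    List.take_take, min_eq_left (by omega)]

theorem norm_map_le {β : Type*} [DecidableEq β] (ψ : FreeGroup α →* FreeGroup β) {D : ℕ}
    (hD : ∀ a, (ψ (mk [a])).norm ≤ D) (v : FreeGroup α) : (ψ v).norm ≤ D * v.norm := by
  suffices ∀ L : List (α × Bool), (ψ (mk L)).norm ≤ D * L.length by
    simpa only [mk_toWord, norm] using this v.toWord
  intro L
  induction L with
  | nil => simp [← one_eq_mk]
  | cons a L ih =>
    calc (ψ (mk (a :: L))).norm = (ψ (mk [a]) * ψ (mk L)).norm := by
          rw [← _root_.map_mul, mul_mk, List.singleton_append]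
      _ ≤ D + D * L.length := (FreeGroup.norm_mul_le _ _).trans (add_le_add (hD a) ih)
      _ = D * (a :: L).length := by simp [mul_add, add_comm]

end FreeGroup

namespace FGC

variable {k : ℕ}

theorem ne_linv_iff {a b : L k} : b ≠ linv k a ↔ (a.1 = b.1 → a.2 = b.2) := by
  obtain ⟨i, s⟩ := a
  obtain ⟨j, t⟩ := b
  cases s <;> cases t <;> simp [linv, eq_comm]

theorem exists_first_ne {p q : Boundary k} (hpq : p ≠ q) :
    ∃ m, (∀ i < m, p.1 i = q.1 i) ∧ p.1 m ≠ q.1 m := by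
  have h : ∃ m, p.1 m ≠ q.1 m := by
    by_contra! h
    exact hpq (Subtype.ext (funext h))
  exact ⟨Nat.find h, fun i hi => not_not.1 (Nat.find_min h hi), Nat.find_spec h⟩

theorem isReduced_ofFn (x : Boundary k) (n : ℕ) :
    FreeGroup.IsReduced (List.ofFn fun i : Fin n => x.1 i) := by
  rw [FreeGroup.IsReduced, List.isChain_iff_getElem]
  intro i hi
  simpa [← ne_linv_iff] using x.2 i

theorem toWord_prefixEl (x : Boundary k) (n : ℕ) :
    (prefixEl k x n).toWord = List.ofFn fun i : Fin n => x.1 i := by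
  rw [prefixEl, FreeGroup.toWord_mk, (isReduced_ofFn x n).reduce_eq]

theorem norm_prefixEl (x : Boundary k) (n : ℕ) : (prefixEl k x n).norm = n := by
  simp [FreeGroup.norm, toWord_prefixEl]

def tailRay (x : Boundary k) (m : ℕ) : Boundary k :=
  ⟨fun i => x.1 (m + i), fun n => x.2 (m + n)⟩

theorem prefixEl_add (x : Boundary k) (m j : ℕ) :
    prefixEl k x (m + j) = prefixEl k x m * prefixEl k (tailRay x m) j := by
  simp only [prefixEl, FreeGroup.mul_mk, List.ofFn_add]
  rfl

theorem prefixEl_succ (x : Boundary k) (n : ℕ) :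
    prefixEl k x (n + 1) = prefixEl k x n * FreeGroup.mk [x.1 n] := by
  rw [prefixEl_add]
  simp [prefixEl, tailRay]

theorem mem_Cyl_iff {v : F k} {y : Boundary k} :
    y ∈ Cyl k v ↔ ∀ i (hi : i < v.toWord.length), y.1 i = v.toWord[i] :=
  ⟨fun h i hi => h ⟨i, hi⟩, fun h i => h i i.2⟩

theorem mem_Cyl_prefixEl {x y : Boundary k} {m : ℕ} :
    y ∈ Cyl k (prefixEl k x m) ↔ ∀ i < m, y.1 i = x.1 i := by
  simp [mem_Cyl_iff, toWord_prefixEl]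

theorem Cyl_subset_Cyl_prefixEl {v : F k} {x : Boundary k} {m : ℕ}
    (h : v.toWord.take m = List.ofFn fun i : Fin m => x.1 i) :
    Cyl k v ⊆ Cyl k (prefixEl k x m) := by
  intro y hy
  have hm : m ≤ v.toWord.length := by simpa using congrArg List.length h
  refine mem_Cyl_prefixEl.2 fun i hi => ?_
  have hx := congrArg (·[i]?) h
  simp only [List.getElem?_take_of_lt hi, List.getElem?_ofFn] at hx
  rw [mem_Cyl_iff.1 hy i (by omega)]
  simpa [List.getElem?_eq_getElem (by omega : i < v.toWord.length), hi] using hx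

theorem prefixEl_eq_of_mem_Cyl {x y : Boundary k} {m : ℕ} (h : y ∈ Cyl k (prefixEl k x m)) :
    prefixEl k y m = prefixEl k x m := by
  unfold prefixEl
  congr 1
  exact List.ofFn_inj.2 (funext fun i => mem_Cyl_prefixEl.1 h i i.2)

theorem isClosed_setOf_red : IsClosed {x : ℕ → L k | Red k x} := by
  simp only [Red, Set.ofPred_forall]
  exact isClosed_iInter fun n => IsClosed.preimage (f := fun x : ℕ → L k => (x (n + 1), x n))
    ((continuous_apply (n + 1)).prodMk (continuous_apply n))
    (isClosed_discrete {a : L k × L k | a.1 ≠ linv k a.2})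

instance : CompactSpace (Boundary k) :=
  isCompact_iff_compactSpace.mp isClosed_setOf_red.isCompact

instance : SecondCountableTopology (Boundary k) :=
  inferInstanceAs (SecondCountableTopology {x : ℕ → L k | Red k x})

theorem continuous_apply_val (i : ℕ) : Continuous fun y : Boundary k => y.1 i :=
  (continuous_apply i).comp continuous_subtype_val

theorem isClopen_Cyl (v : F k) : IsClopen (Cyl k v) := by
  have h : Cyl k v = ⋂ i : Fin v.toWord.length,
      (fun y : Boundary k => y.1 i) ⁻¹' {v.toWord.get i} := by
    ext y
    simp [Cyl]
  rw [h]
  exact isClopen_iInter_of_finite fun i => (isClopen_discrete _).preimage (continuous_apply_val i)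

theorem IsBdryExt.exists_ofFn_eq_take {Φ : F k ≃* F k} {b : Boundary k → Boundary k}
    (hb : IsBdryExt k Φ b) (m : ℕ) :
    ∃ N, ∀ x, (List.ofFn fun i : Fin m => (b x).1 i) = (Φ (prefixEl k x N)).toWord.take m := by
  obtain ⟨C, hC⟩ := (Set.finite_range fun a : L k => (Φ (FreeGroup.mk [a])).norm).bddAbove
  obtain ⟨D, hD⟩ := (Set.finite_range fun a : L k => (Φ.symm (FreeGroup.mk [a])).norm).bddAbove
  have hgrow : ∀ x n, n ≤ (D + 1) * (Φ (prefixEl k x n)).norm := fun x n =>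
    calc n = (Φ.symm (Φ (prefixEl k x n))).norm := by rw [Φ.symm_apply_apply, norm_prefixEl]
      _ ≤ D * (Φ (prefixEl k x n)).norm :=
        FreeGroup.norm_map_le Φ.symm.toMonoidHom (fun a => hD ⟨a, rfl⟩) _
      _ ≤ (D + 1) * (Φ (prefixEl k x n)).norm := by gcongr; omega
  -- bounded cancellation: once `Φ (x|n)` is longer than `m + C`, its first `m` letters are final
  have hstable : ∀ x, ∀ n ≥ (D + 1) * (m + C),
      (Φ (prefixEl k x n)).toWord.take m =
        (Φ (prefixEl k x ((D + 1) * (m + C)))).toWord.take m := by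
    intro x n hn
    induction n, hn using Nat.le_induction with
    | base => rfl
    | succ n hn ih =>
      rw [← ih, prefixEl_succ, map_mul]
      refine FreeGroup.take_toWord_mul_of_norm_le ((Nat.add_le_add_left (hC ⟨_, rfl⟩) m).trans ?_)
      exact Nat.le_of_mul_le_mul_left (hn.trans (hgrow x n)) D.succ_pos
  refine ⟨(D + 1) * (m + C), fun x => ?_⟩
  obtain ⟨N, hN⟩ := hb x m
  rw [← hN _ (le_max_left N _), hstable x _ (le_max_right _ _)]

theorem IsBdryExt.continuous {Φ : F k ≃* F k} {b : Boundary k → Boundary k}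
    (hb : IsBdryExt k Φ b) : Continuous b := by
  refine continuous_induced_rng.2 (continuous_pi fun i => IsLocallyConstant.continuous ?_)
  rw [IsLocallyConstant.iff_eventually_eq]
  intro x
  obtain ⟨N, hN⟩ := hb.exists_ofFn_eq_take (i + 1)
  filter_upwards [(isClopen_Cyl (prefixEl k x N)).isOpen.mem_nhds
    (mem_Cyl_prefixEl.2 fun _ _ => rfl)] with y hy
  have hxy := hN y
  rw [prefixEl_eq_of_mem_Cyl hy, ← hN x] at hxy
  exact congrFun (List.ofFn_inj.1 hxy) (Fin.last i)

theorem continuous_pairMap {b : Boundary k → Boundary k} (hb : Continuous b) :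
    Continuous (pairMap k b) :=
  hb.prodMap hb

theorem preimage_pairMap_subset_D2 (b : Boundary k → Boundary k)
    {S : Set (Boundary k × Boundary k)} (hS : S ⊆ D2 k) : pairMap k b ⁻¹' S ⊆ D2 k :=
  fun z hz hdiag => hS hz (by simp [pairMap, hdiag])

def pairCyl (p q : Boundary k) (m : ℕ) : Set (Boundary k × Boundary k) :=
  Cyl k (prefixEl k p m) ×ˢ Cyl k (prefixEl k q m)

theorem isClopen_pairCyl (p q : Boundary k) (m : ℕ) : IsClopen (pairCyl p q m) :=
  (isClopen_Cyl _).prod (isClopen_Cyl _)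

theorem pairCyl_subset_D2 {p q : Boundary k} {j m : ℕ} (hj : p.1 j ≠ q.1 j) (hjm : j < m) :
    pairCyl p q m ⊆ D2 k := fun _ hz hdiag =>
  hj ((mem_Cyl_prefixEl.1 hz.1 j hjm).symm.trans (hdiag ▸ mem_Cyl_prefixEl.1 hz.2 j hjm))

theorem antitone_pairCyl (p q : Boundary k) : Antitone (pairCyl p q) := fun _ _ hmn =>
  Set.prod_mono
    (fun _ hy => mem_Cyl_prefixEl.2 fun i hi => mem_Cyl_prefixEl.1 hy i (by omega))
    (fun _ hy => mem_Cyl_prefixEl.2 fun i hi => mem_Cyl_prefixEl.1 hy i (by omega))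

theorem iInter_pairCyl (p q : Boundary k) : ⋂ m, pairCyl p q m = {(p, q)} := by
  ext z
  simp only [Set.mem_iInter, Set.mem_singleton_iff, pairCyl, Set.mem_prod, mem_Cyl_prefixEl]
  constructor
  · intro h
    exact Prod.ext (Subtype.ext (funext fun i => (h (i + 1)).1 i i.lt_succ_self))
      (Subtype.ext (funext fun i => (h (i + 1)).2 i i.lt_succ_self))
  · rintro rfl m
    exact ⟨fun _ _ => rfl, fun _ _ => rfl⟩

theorem WordTendsto.eventually_Cyl_subset {pn : ℕ → F k} {p : Boundary k}
    (h : WordTendsto k pn p) (m : ℕ) : ∀ᶠ n in atTop, Cyl k (pn n) ⊆ Cyl k (prefixEl k p m) := by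
  obtain ⟨N, hN⟩ := h m
  exact eventually_atTop.2 ⟨N, fun n hn => Cyl_subset_Cyl_prefixEl (hN n hn)⟩

theorem IsCurrent.measure_ne_top {η : Measure (Boundary k × Boundary k)} (hη : IsCurrent k η)
    {K : Set (Boundary k × Boundary k)} (hK : IsClosed K) (hKD : K ⊆ D2 k) : η K ≠ ⊤ :=
  (hη.2.2 K hKD hK.isCompact).ne

theorem le_measure_of_tendsto_integral {μs : ℕ → Measure (Boundary k × Boundary k)}
    {η : Measure (Boundary k × Boundary k)}
    (hconv : ∀ φ : TestF k, Tendsto (fun n => ∫ z, φ.1 z ∂μs n) atTop (𝓝 (∫ z, φ.1 z ∂η)))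
    {K : Set (Boundary k × Boundary k)} (hK : IsClopen K) (hKD : K ⊆ D2 k)
    (hμs : ∀ n, μs n K ≠ ⊤) (hη : η K ≠ ⊤) {c : ℝ≥0∞} (hc : ∀ᶠ n in atTop, c ≤ μs n K) :
    c ≤ η K := by
  have hφ : tsupport (K.indicator (1 : Boundary k × Boundary k → ℝ)) ⊆ K :=
    closure_minimal Set.support_indicator_subset hK.isClosed
  have hlim := hconv ⟨K.indicator 1, hK.continuous_indicator continuous_const,
    hK.isClosed.isCompact.of_isClosed_subset (isClosed_tsupport _) hφ, hφ.trans hKD⟩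
  simp only [integral_indicator_one hK.isOpen.measurableSet, measureReal_def] at hlim
  exact ge_of_tendsto ((ENNReal.tendsto_toReal_iff hμs hη).1 hlim) hc

theorem prependAux_ofFn_tailRay (x : Boundary k) (m : ℕ) :
    prependAux k (List.ofFn fun i : Fin m => x.1 i).reverse (tailRay x m).1 = x.1 := by
  induction m with
  | zero => exact funext fun i => congrArg x.1 (Nat.zero_add i)
  | succ m ih =>
    have hcons : cons k (x.1 m) (tailRay x (m + 1)).1 = (tailRay x m).1 := by
      funext i
      cases i with
      | zero => rfl
      | succ i => exact congrArg x.1 (Nat.add_right_comm m 1 i)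
    have hne : (tailRay x (m + 1)).1 0 ≠ linv k (x.1 m) := x.2 m
    simp only [List.ofFn_succ_last, Fin.val_castSucc, Fin.val_last, List.reverse_concat',
      prependAux, if_neg hne, hcons]
    exact ih

theorem act_prefixEl_tailRay (x : Boundary k) (m : ℕ) :
    act k (prefixEl k x m) (tailRay x m) = x :=
  Subtype.ext <| by
    show prependAux k (prefixEl k x m).toWord.reverse (tailRay x m).1 = x.1
    rw [toWord_prefixEl]
    exact prependAux_ofFn_tailRay x m

theorem mem_Cyl2_prefixEl {p q : Boundary k} {m : ℕ} (hpre : ∀ i < m, p.1 i = q.1 i)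
    (hm : p.1 m ≠ q.1 m) (j : ℕ) :
    (p, q) ∈ Cyl2 k (prefixEl k p m) (prefixEl k q (m + j)) := by
  have hpq : prefixEl k p m = prefixEl k q m := prefixEl_eq_of_mem_Cyl (mem_Cyl_prefixEl.2 hpre)
  refine ⟨(tailRay p m, tailRay q m), ⟨hm, ?_⟩, ?_⟩
  · rw [hpq, prefixEl_add, inv_mul_cancel_left]
    exact mem_Cyl_prefixEl.2 fun _ _ => rfl
  · exact Prod.ext (act_prefixEl_tailRay p m) (hpq ▸ act_prefixEl_tailRay q m)

theorem measure_singleton_eq_zero_of_uniform (hk : 2 ≤ k) {μA : Measure (Boundary k)}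
    (hμA : ∀ v : F k, v ≠ 1 →
      μA (Cyl k v) = ((2 * k : ℝ≥0∞) * (2 * k - 1) ^ (wordLength k v - 1))⁻¹)
    {ηA : Measure (Boundary k × Boundary k)}
    (hηA' : ∀ x y : F k, ηA (Cyl2 k x y) = μA (Cyl k (x⁻¹ * y)))
    {p q : Boundary k} (hpq : p ≠ q) : ηA {(p, q)} = 0 := by
  obtain ⟨m, hpre, hm⟩ := exists_first_ne hpq
  have hbound : ∀ j, ηA {(p, q)} ≤ (2 * k - 1 : ℝ≥0∞)⁻¹ ^ j := by
    intro j
    have hne : prefixEl k (tailRay q m) (j + 1) ≠ 1 := by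
      rw [ne_eq, ← FreeGroup.norm_eq_zero, norm_prefixEl]
      omega
    calc ηA {(p, q)} ≤ ηA (Cyl2 k (prefixEl k p m) (prefixEl k q (m + (j + 1)))) :=
          measure_mono (Set.singleton_subset_iff.2 (mem_Cyl2_prefixEl hpre hm _))
      _ = ((2 * k : ℝ≥0∞) * (2 * k - 1) ^ j)⁻¹ := by
          rw [hηA', prefixEl_eq_of_mem_Cyl (mem_Cyl_prefixEl.2 hpre), prefixEl_add,
            inv_mul_cancel_left, hμA _ hne, wordLength, ← FreeGroup.norm, norm_prefixEl,
            Nat.add_sub_cancel]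
      _ ≤ ((2 * k - 1 : ℝ≥0∞) ^ j)⁻¹ := by
          gcongr
          exact le_mul_of_one_le_left' (by exact_mod_cast (by omega : 1 ≤ 2 * k))
      _ = (2 * k - 1 : ℝ≥0∞)⁻¹ ^ j := ENNReal.inv_pow
  have hr : (2 * k - 1 : ℝ≥0∞)⁻¹ < 1 :=
    ENNReal.inv_lt_one.2 (lt_tsub_iff_right.2 (by exact_mod_cast (by omega : 1 + 1 < 2 * k)))
  exact nonpos_iff_eq_zero.1
    (ge_of_tendsto' (ENNReal.tendsto_pow_atTop_nhds_zero_of_lt_one hr) hbound)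

theorem part_concentrated_on_attractor_general (k : ℕ) (hk : 2 ≤ k)
    (μA : Measure (Boundary k))
    (hμA : ∀ v : F k, v ≠ 1 →
      μA (Cyl k v) = ((2 * k : ℝ≥0∞) * (2 * k - 1) ^ (wordLength k v - 1))⁻¹)
    (ηA : Measure (Boundary k × Boundary k)) (hηA : IsCurrent k ηA)
    (hηA' : ∀ x y : F k, ηA (Cyl2 k x y) = μA (Cyl k (x⁻¹ * y)))
    (bd : MulAut (F k) → Boundary k → Boundary k)
    (hbd : ∀ Φ : MulAut (F k), IsBdryExt k Φ (bd Φ))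
    (Ψ : ℕ → MulAut (F k))
    (η : Measure (Boundary k × Boundary k)) (hη : IsCurrent k η)
    (hconv : ∀ φ : TestF k,
      Tendsto (fun n => ∫ p, φ.1 p ∂(Measure.map (pairMap k (bd (Ψ n))) ηA))
        atTop (𝓝 (∫ p, φ.1 p ∂η)))
    (p q : Boundary k) (hpq : p ≠ q)
    (pn qn : ℕ → F k)
    (hpn : WordTendsto k pn p) (hqn : WordTendsto k qn q)
    (c : ℝ≥0∞)
    (hbig : ∀ n, c < ηA (pairMap k (bd (Ψ n)) ⁻¹' (Cyl k (pn n) ×ˢ Cyl k (qn n)))) :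
    c ≤ η {(p, q)} ∧ ηA {(p, q)} = 0 := by
  refine ⟨?_, measure_singleton_eq_zero_of_uniform hk hμA hηA' hpq⟩
  obtain ⟨j, -, hj⟩ := exists_first_ne hpq
  have hmap : ∀ n m, Measure.map (pairMap k (bd (Ψ n))) ηA (pairCyl p q m) =
      ηA (pairMap k (bd (Ψ n)) ⁻¹' pairCyl p q m) := fun n m =>
    Measure.map_apply (continuous_pairMap (hbd (Ψ n)).continuous).measurable
      (isClopen_pairCyl p q m).isOpen.measurableSet
  have hcyl : ∀ m > j, c ≤ η (pairCyl p q m) := by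
    intro m hm
    have hD2 := pairCyl_subset_D2 hj hm
    refine le_measure_of_tendsto_integral hconv (isClopen_pairCyl p q m) hD2 (fun n => ?_)
      (hη.measure_ne_top (isClopen_pairCyl p q m).isClosed hD2) ?_
    · rw [hmap]
      exact hηA.measure_ne_top ((isClopen_pairCyl p q m).isClosed.preimage
        (continuous_pairMap (hbd (Ψ n)).continuous)) (preimage_pairMap_subset_D2 _ hD2)
    · filter_upwards [hpn.eventually_Cyl_subset m, hqn.eventually_Cyl_subset m] with n hp hq
      rw [hmap]
      exact (hbig n).le.trans (measure_mono (Set.preimage_mono (Set.prod_mono hp hq)))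
  have hlim := tendsto_measure_iInter_atTop (μ := η)
    (fun m => (isClopen_pairCyl p q m).isOpen.measurableSet.nullMeasurableSet)
    (antitone_pairCyl p q) ⟨j + 1, hη.measure_ne_top (isClopen_pairCyl p q _).isClosed
      (pairCyl_subset_D2 hj j.lt_succ_self)⟩
  rw [iInter_pairCyl] at hlim
  exact ge_of_tendsto hlim (eventually_atTop.2 ⟨j + 1, hcyl⟩)

theorem part_concentrated_on_attractor (k : ℕ) (hk : 2 ≤ k)
    (μA : Measure (Boundary k)) [IsProbabilityMeasure μA]
    (hμA : ∀ v : F k, v ≠ 1 →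
      μA (Cyl k v) = ((2 * k : ℝ≥0∞) * (2 * k - 1) ^ (wordLength k v - 1))⁻¹)
    (ηA : Measure (Boundary k × Boundary k)) (hηA : IsCurrent k ηA)
    (hηA' : ∀ x y : F k, ηA (Cyl2 k x y) = μA (Cyl k (x⁻¹ * y)))
    (bd : MulAut (F k) → Boundary k → Boundary k)
    (hbd : ∀ Φ : MulAut (F k), IsBdryExt k Φ (bd Φ))
    (Ψ : ℕ → MulAut (F k))
    (η : Measure (Boundary k × Boundary k)) (hη : IsCurrent k η)
    (hconv : ∀ φ : TestF k,
      Tendsto (fun n => ∫ p, φ.1 p ∂(Measure.map (pairMap k (bd (Ψ n))) ηA))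
        atTop (𝓝 (∫ p, φ.1 p ∂η)))
    (p q : Boundary k) (hpq : p ≠ q)
    (pn qn : ℕ → F k) (hpn1 : ∀ n, pn n ≠ 1) (hqn1 : ∀ n, qn n ≠ 1)
    (hpn : WordTendsto k pn p) (hqn : WordTendsto k qn q)
    (c : ℝ≥0∞) (hc : 0 < c)
    (hbig : ∀ n, c < ηA (pairMap k (bd (Ψ n)) ⁻¹' (Cyl k (pn n) ×ˢ Cyl k (qn n)))) :
    c ≤ η {(p, q)} ∧ ηA {(p, q)} = 0 :=
  part_concentrated_on_attractor_general k hk μA hμA ηA hηA hηA' bd hbd Ψ η hη hconv p q hpq pn qn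
    hpn hqn c hbig

end FGC
end

section
/- Let (Φ_n) be a sequence of automorphisms of F such that for every f ∈ F there is a constant M(f) with ||Φ_n(f)|| < M(f) for all n. Then there exist elements v_n ∈ F and a strictly increasing sequence of indices (n_i) such that the automorphisms x ↦ v_{n_i}⁻¹ Φ_{n_i}(x) v_{n_i} are all equal; equivalently, (Φ_n) has a subsequence that is constant in Out(F). -/
open MeasureTheory Filter Topology
open scoped ENNReal NNReal

namespace FGC

noncomputable section

variable (k : ℕ)

/-!
Cyclic length is a conjugacy invariant, so a single bound `N` works for `‖Φ n z‖` for all `n`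
and all the finitely many `z` with `|z| ≤ 2`. For a family `b a` with `‖b a‖ < N` and
`‖b a * b c‖ < N`, a conjugator `v` minimising `∑ a, |v⁻¹ * b a * v|` makes every
`|v⁻¹ * b a * v| < N`: a longer one is not cyclically reduced, so it has the form `t ⋯ t⁻¹`;
every other member must then start with `t` or end with `t⁻¹` (otherwise the product would be
cyclically reduced and long), and conjugating by the letter `t` would shorten the sum.
So the normalised automorphisms `v⁻¹ Φ n v` send the basis into a finite ball, one assignment
of basis images recurs infinitely often, and an automorphism is determined by these images.
-/

section FreeGroupWords

open FreeGroup

variable {α : Type*} [DecidableEq α]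

lemma head?_toWord_inv (x : FreeGroup α) :
    x⁻¹.toWord.head? = x.toWord.getLast?.map fun a => (a.1, !a.2) := by
  rw [toWord_inv, invRev, List.head?_reverse, List.getLast?_map]

lemma head?_toWord_inv_eq {x : FreeGroup α} {l : List (α × Bool)} {a b : α × Bool}
    (ha : a ∈ x.toWord.getLast?) (hb : b ∈ l.head?) (hab : a.1 = b.1) (hne : a.2 ≠ b.2) :
    x⁻¹.toWord.head? = l.head? := by
  rw [head?_toWord_inv, Option.mem_def.mp ha, Option.mem_def.mp hb]
  simp [hab, Bool.eq_not.mpr hne]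

lemma toWord_mul_of_head?_ne {x y : FreeGroup α} (h : x⁻¹.toWord.head? ≠ y.toWord.head?) :
    (x * y).toWord = x.toWord ++ y.toWord := by
  refine toWord_mul x y ▸ IsReduced.reduce_eq ?_
  refine List.isChain_append.mpr ⟨isReduced_toWord, isReduced_toWord, fun a ha b hb hab => ?_⟩
  by_contra hne
  exact h (head?_toWord_inv_eq ha hb hab hne)

lemma head?_mul_of_head?_ne {x y : FreeGroup α} (h : x⁻¹.toWord.head? ≠ y.toWord.head?)
    (hx : x ≠ 1) : (x * y).toWord.head? = x.toWord.head? := by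
  rw [toWord_mul_of_head?_ne h, List.head?_append_of_ne_nil _ (toWord_eq_nil_iff.not.mpr hx)]

lemma norm_mul_of_head?_ne {x y : FreeGroup α} (h : x⁻¹.toWord.head? ≠ y.toWord.head?) :
    (x * y).norm = x.norm + y.norm := by
  simp only [FreeGroup.norm, toWord_mul_of_head?_ne h, List.length_append]

lemma isCyclicallyReduced_toWord {x : FreeGroup α}
    (h : x.toWord.head? ≠ x⁻¹.toWord.head?) : IsCyclicallyReduced x.toWord := by
  refine ⟨isReduced_toWord, fun a ha b hb hab => ?_⟩
  by_contra hne
  exact h (head?_toWord_inv_eq ha hb hab hne).symm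

lemma norm_pow_le (x : FreeGroup α) (n : ℕ) : (x ^ n).norm ≤ n * x.norm := by
  rw [FreeGroup.norm, toWord_pow]
  refine reduce.red.length_le.trans_eq ?_
  simp [List.length_flatten, FreeGroup.norm]

lemma norm_pow_of_isCyclicallyReduced {x : FreeGroup α} (h : IsCyclicallyReduced x.toWord)
    (n : ℕ) : (x ^ n).norm = n * x.norm := by
  rw [FreeGroup.norm, toWord_pow, (h.flatten_replicate n).isReduced.reduce_eq]
  simp [List.length_flatten, FreeGroup.norm]

/-- Powers of `x` grow like `n * norm x`, those of a conjugate `u * x * u⁻¹` at most like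
`2 * norm u + n * norm (u * x * u⁻¹)`. -/
lemma norm_le_norm_conj {x : FreeGroup α} (h : IsCyclicallyReduced x.toWord) (u : FreeGroup α) :
    x.norm ≤ (u * x * u⁻¹).norm := by
  set n := 2 * u.norm + 1 with hn
  have hpow : x ^ n = u⁻¹ * (u * x * u⁻¹) ^ n * u := by rw [conj_pow]; group
  have key : n * x.norm ≤ 2 * u.norm + n * (u * x * u⁻¹).norm :=
    calc n * x.norm = (u⁻¹ * (u * x * u⁻¹) ^ n * u).norm := by
          rw [← hpow, norm_pow_of_isCyclicallyReduced h]
      _ ≤ u⁻¹.norm + ((u * x * u⁻¹) ^ n).norm + u.norm :=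
          (FreeGroup.norm_mul_le _ _).trans (Nat.add_le_add_right (FreeGroup.norm_mul_le _ _) _)
      _ ≤ 2 * u.norm + n * (u * x * u⁻¹).norm := by
          have := norm_pow_le (u * x * u⁻¹) n
          rw [norm_inv_eq]
          omega
  by_contra! hlt
  linarith [Nat.mul_le_mul_left n hlt]

lemma norm_letter_conj_le_of_head? {x : FreeGroup α} {t : α × Bool}
    (h : x.toWord.head? = some t) : ((mk [t])⁻¹ * x * mk [t]).norm ≤ x.norm := by
  obtain ⟨m, hm⟩ := List.head?_eq_some_iff.mp h
  have hx : x = mk [t] * mk m := by rw [mul_mk, List.singleton_append, ← hm, mk_toWord]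
  calc ((mk [t])⁻¹ * x * mk [t]).norm = (mk m * mk [t]).norm := by rw [hx]; group
    _ ≤ m.length + 1 := (FreeGroup.norm_mul_le _ _).trans (Nat.add_le_add norm_mk_le norm_mk_le)
    _ = x.norm := by simp [FreeGroup.norm, hm]

lemma norm_letter_conj_le_of_head?_inv {x : FreeGroup α} {t : α × Bool}
    (h : x⁻¹.toWord.head? = some t) : ((mk [t])⁻¹ * x * mk [t]).norm ≤ x.norm := by
  have := norm_letter_conj_le_of_head? h
  rwa [show (mk [t])⁻¹ * x⁻¹ * mk [t] = ((mk [t])⁻¹ * x * mk [t])⁻¹ by group, norm_inv_eq,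
    norm_inv_eq] at this

lemma norm_letter_conj_add_two_le {x : FreeGroup α} {t : α × Bool}
    (h : x.toWord.head? = some t) (hinv : x⁻¹.toWord.head? = some t) :
    ((mk [t])⁻¹ * x * mk [t]).norm + 2 ≤ x.norm := by
  obtain ⟨m, hm⟩ := List.head?_eq_some_iff.mp h
  rw [head?_toWord_inv, hm] at hinv
  rcases List.eq_nil_or_concat' m with rfl | ⟨m', z, rfl⟩
  · simp [Prod.ext_iff] at hinv
  have hz : mk [z] = (mk [t])⁻¹ := by
    rw [List.getLast?_cons, List.getLast?_concat] at hinv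
    simp only [Option.getD_some, Option.map_some, Option.some.injEq] at hinv
    rw [inv_mk, ← hinv]
    simp [invRev]
  have hx : x = mk [t] * mk m' * (mk [t])⁻¹ := by
    rw [← hz, mul_mk, mul_mk, ← mk_toWord (x := x), hm]
    rfl
  calc ((mk [t])⁻¹ * x * mk [t]).norm + 2 = (mk m').norm + 2 := by rw [hx]; group
    _ ≤ m'.length + 2 := Nat.add_le_add_right norm_mk_le _
    _ = x.norm := by simp [FreeGroup.norm, hm]

lemma finite_setOf_norm_lt [Finite α] (N : ℕ) : {x : FreeGroup α | x.norm < N}.Finite :=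
  (List.finite_length_lt _ N).preimage toWord_injective.injOn

end FreeGroupWords

lemma exists_strictMono_forall_eq_of_finite_range {β : Type*} {f : ℕ → β}
    (hf : (Set.range f).Finite) : ∃ y, ∃ ι : ℕ → ℕ, StrictMono ι ∧ ∀ i, f (ι i) = y := by
  have := hf.to_subtype
  obtain ⟨y, hy⟩ := Finite.exists_infinite_fiber (Set.rangeFactorization f)
  have hfreq : ∃ᶠ n in atTop, f n = y := Nat.frequently_atTop_iff_infinite.mpr <|
    (Set.infinite_coe_iff.mp hy).mono fun n hn => show f n = y from congrArg Subtype.val hn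
  exact ⟨y, Filter.extraction_of_frequently_atTop hfreq⟩

section CyclicLength

open FreeGroup

lemma cyclLength_le_norm_conj (v g : F k) : cyclLength k v ≤ (g * v * g⁻¹).norm :=
  Nat.sInf_le ⟨g, rfl⟩

lemma cyclLength_conj (g v : F k) : cyclLength k (g * v * g⁻¹) = cyclLength k v := by
  unfold cyclLength
  congr 1
  ext n
  constructor
  · rintro ⟨h, rfl⟩
    exact ⟨h * g, congrArg (wordLength k) (by group)⟩
  · rintro ⟨h, rfl⟩
    exact ⟨h * g⁻¹, congrArg (wordLength k) (by group)⟩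

lemma cyclLength_eq_norm {v : F k} (h : IsCyclicallyReduced v.toWord) :
    cyclLength k v = v.norm :=
  le_antisymm (by simpa using cyclLength_le_norm_conj k v 1)
    (le_csInf ⟨_, 1, rfl⟩ fun _ ⟨g, hg⟩ => hg ▸ norm_le_norm_conj h g)

lemma norm_letter_conj_le {x y : F k} {t : L k} (hx : x.toWord.head? = some t)
    (hxinv : x⁻¹.toWord.head? = some t) (hxy : cyclLength k (x * y) < x.norm) :
    ((mk [t])⁻¹ * y * mk [t]).norm ≤ y.norm := by
  by_cases hy : y = 1
  · rw [hy, mul_one, inv_mul_cancel]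
  by_cases hyt : y.toWord.head? = some t
  · exact norm_letter_conj_le_of_head? hyt
  by_cases hyt' : y⁻¹.toWord.head? = some t
  · exact norm_letter_conj_le_of_head?_inv hyt'
  -- otherwise `x * y` is cyclically reduced, of length at least `|x|`
  exfalso
  have hx1 : x ≠ 1 := by rintro rfl; simp at hx
  have hne : x⁻¹.toWord.head? ≠ y.toWord.head? := hxinv ▸ Ne.symm hyt
  have hne' : (y⁻¹)⁻¹.toWord.head? ≠ x⁻¹.toWord.head? := by rw [inv_inv, hxinv]; exact hyt
  have hcr : IsCyclicallyReduced (x * y).toWord := by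
    refine isCyclicallyReduced_toWord ?_
    rw [mul_inv_rev, head?_mul_of_head?_ne hne hx1, head?_mul_of_head?_ne hne' (inv_ne_one.mpr hy),
      hx]
    exact Ne.symm hyt'
  have := cyclLength_eq_norm k hcr
  rw [norm_mul_of_head?_ne hne] at this
  omega

lemma exists_letter_conj_sum_norm_lt {ι : Type*} [Fintype ι] {b : ι → F k} {M : ℕ}
    (h₁ : ∀ i, cyclLength k (b i) < M) (h₂ : ∀ i j, cyclLength k (b i * b j) < M) {i₀ : ι}
    (hM : M ≤ (b i₀).norm) :
    ∃ t : L k, ∑ i, ((mk [t])⁻¹ * b i * mk [t]).norm < ∑ i, (b i).norm := by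
  have hlt := (h₁ i₀).trans_le hM
  have hheads : (b i₀).toWord.head? = (b i₀)⁻¹.toWord.head? := by
    by_contra hne
    exact hlt.ne (cyclLength_eq_norm k (isCyclicallyReduced_toWord hne))
  obtain ⟨t, ht⟩ : ∃ t, (b i₀).toWord.head? = some t := by
    rcases hw : (b i₀).toWord with _ | ⟨t, _⟩
    · simp [FreeGroup.norm, hw] at hlt
    · exact ⟨t, rfl⟩
  refine ⟨t, Finset.sum_lt_sum (fun i _ => ?_) ⟨i₀, Finset.mem_univ _, ?_⟩⟩
  · exact norm_letter_conj_le k ht (hheads ▸ ht) ((h₂ i₀ i).trans_le hM)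
  · have := norm_letter_conj_add_two_le ht (hheads ▸ ht)
    omega

lemma exists_conj_norm_lt {ι : Type*} [Fintype ι] (b : ι → F k) (M : ℕ)
    (h₁ : ∀ i, cyclLength k (b i) < M) (h₂ : ∀ i j, cyclLength k (b i * b j) < M) :
    ∃ v : F k, ∀ i, (v⁻¹ * b i * v).norm < M := by
  let S : F k → ℕ := fun v => ∑ i, (v⁻¹ * b i * v).norm
  refine ⟨Function.argmin S, fun i₀ => ?_⟩
  set v := Function.argmin S
  by_contra! hM
  have hconj : ∀ g, cyclLength k (v⁻¹ * g * v) = cyclLength k g := fun g => by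
    simpa using cyclLength_conj k v⁻¹ g
  obtain ⟨t, ht⟩ := exists_letter_conj_sum_norm_lt k (b := fun i => v⁻¹ * b i * v)
    (fun i => (hconj _).trans_lt (h₁ i))
    (fun i j => by
      rw [show v⁻¹ * b i * v * (v⁻¹ * b j * v) = v⁻¹ * (b i * b j) * v by group, hconj]
      exact h₂ i j) hM
  have hS : S (v * mk [t]) = ∑ i, ((mk [t])⁻¹ * (v⁻¹ * b i * v) * mk [t]).norm :=
    Finset.sum_congr rfl fun i _ => by group
  exact (Function.argmin_le S (v * mk [t])).not_gt (hS ▸ ht)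

end CyclicLength

lemma MulAut.inv_conj_mul_eq_iff {α : Type*} (Φ Ψ : MulAut (FreeGroup α)) (v w : FreeGroup α) :
    (MulAut.conj v)⁻¹ * Φ = (MulAut.conj w)⁻¹ * Ψ ↔
      ∀ a, v⁻¹ * Φ (FreeGroup.of a) * v = w⁻¹ * Ψ (FreeGroup.of a) * w := by
  refine ⟨fun h a => ?_, fun h =>
    MulEquiv.toMonoidHom_injective (FreeGroup.ext_hom _ _ fun a => ?_)⟩
  · simpa only [MulAut.mul_apply, MulAut.conj_inv_apply] using congrArg (· (FreeGroup.of a)) h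
  · simpa only [MulEquiv.coe_toMonoidHom, MulAut.mul_apply, MulAut.conj_inv_apply] using h a

theorem bounded_words_constant_subsequence_general (k : ℕ)
    (Φ : ℕ → MulAut (F k))
    (hb : ∀ f : F k, ∃ M : ℕ, ∀ n, cyclLength k (Φ n f) < M) :
    ∃ v : ℕ → F k, ∃ ι : ℕ → ℕ, StrictMono ι ∧
      ∀ i j, (MulAut.conj (v i))⁻¹ * Φ (ι i) = (MulAut.conj (v j))⁻¹ * Φ (ι j) := by
  choose M hM using hb
  have hshort := finite_setOf_norm_lt (α := Fin k) 3
  set N := hshort.toFinset.sup M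
  have hN : ∀ n z, z.norm < 3 → cyclLength k (Φ n z) < N := fun n z hz =>
    (hM z n).trans_le (Finset.le_sup (hshort.mem_toFinset.mpr hz))
  have hconj : ∀ n, ∃ v : F k, ∀ a, (v⁻¹ * Φ n (FreeGroup.of a) * v).norm < N := fun n =>
    exists_conj_norm_lt k _ N (fun a => hN n _ (by simp [FreeGroup.norm_of]))
      fun a b => map_mul (Φ n) _ _ ▸ hN n _ ((FreeGroup.norm_mul_le _ _).trans_lt
        (by simp [FreeGroup.norm_of]))
  choose v hv using hconj
  have hfin : (Set.range fun n a => (v n)⁻¹ * Φ n (FreeGroup.of a) * v n).Finite :=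
    (Set.Finite.pi fun _ => finite_setOf_norm_lt N).subset <| Set.range_subset_iff.mpr
      fun n a _ => hv n a
  obtain ⟨_, ι, hι, hconst⟩ := exists_strictMono_forall_eq_of_finite_range hfin
  exact ⟨v ∘ ι, ι, hι, fun i j => (MulAut.inv_conj_mul_eq_iff _ _ _ _).mpr
    (congrFun ((hconst i).trans (hconst j).symm))⟩

theorem bounded_words_constant_subsequence (k : ℕ) (hk : 2 ≤ k)
    (Φ : ℕ → MulAut (F k))
    (hb : ∀ f : F k, ∃ M : ℕ, ∀ n, cyclLength k (Φ n f) < M) :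
    ∃ v : ℕ → F k, ∃ ι : ℕ → ℕ, StrictMono ι ∧
      ∀ i j, (MulAut.conj (v i))⁻¹ * Φ (ι i) = (MulAut.conj (v j))⁻¹ * Φ (ι j) :=
  bounded_words_constant_subsequence_general k Φ hb

end

end FGC
end
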